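/- For the bi-delta moment-closure system, each eigenvalue field is linearly degenerate: for each eigenvalue λ⁽ᵏ⁾ = μᵢ with corresponding eigenvector r⁽ᵏ⁾ = (1, μᵢ, μᵢ², μᵢ³), one has ∇_U λ⁽ᵏ⁾ · r⁽ᵏ⁾ = 0, where the gradient is taken with respect to the conserved moments U = (M₀, M₁, M₂, M₃). -/

import Mathlib

/-!
Every state with `ρ > 0`, `p > 0` is the moment vector of a two-atom measure `α δ_μ + β δ_ν`
with positive weights, and the eigenvalue formula returns the nodes `(μ + ν)/2 ± |μ - ν|/2`,
independently of the weights. Moving along `r = (1, μ, μ², μ³)` only changes the weight `α`,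
so `λ = μ` is constant on that line and its derivative in the direction `r` vanishes.
-/

open Filter Topology

/-- The bi-delta eigenvalue `μ = u + q/(2p) + s·√(p/ρ + (q/(2p))²)` (with sign `s = ∓1`)
viewed as a function of the conserved moments `U = (M₀, M₁, M₂, M₃)`, via the primitive
variable recovery `ρ = M₀`, `u = M₁/M₀`, `p = M₂ - ρu²`, `q = M₃ - ρu³ - 3pu`. -/
noncomputable def biDeltaEigenvalue (s : ℝ) (V : Fin 4 → ℝ) : ℝ :=
  let ρ := V 0
  let u := V 1 / V 0
  let p := V 2 - ρ * u^2
  let q := V 3 - ρ * u^3 - 3 * p * u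
  u + q/(2*p) + s * Real.sqrt (p/ρ + (q/(2*p))^2)

theorem fderiv_apply_eq_zero_of_eventually_eq_on_line {𝕜 E F : Type*}
    [NontriviallyNormedField 𝕜]
    [NormedAddCommGroup E] [NormedSpace 𝕜 E] [NormedAddCommGroup F] [NormedSpace 𝕜 F]
    {f : E → F} {x v : E} (h : ∀ᶠ t in 𝓝 (0 : 𝕜), f (x + t • v) = f x) :
    fderiv 𝕜 f x v = 0 := by
  by_cases hf : DifferentiableAt 𝕜 f x
  · rw [← hf.lineDeriv_eq_fderiv, lineDeriv, Filter.EventuallyEq.deriv_eq h, deriv_const]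
  · simp [fderiv_zero_of_not_differentiableAt hf]

def biDeltaMoments (α β μ ν : ℝ) : Fin 4 → ℝ :=
  ![α + β, α * μ + β * ν, α * μ ^ 2 + β * ν ^ 2, α * μ ^ 3 + β * ν ^ 3]

theorem biDeltaMoments_add_smul (α β μ ν t : ℝ) :
    biDeltaMoments α β μ ν + t • ![1, μ, μ ^ 2, μ ^ 3] =
      biDeltaMoments (α + t) β μ ν := by
  ext k
  fin_cases k <;>
    simp only [biDeltaMoments, Pi.add_apply, Pi.smul_apply, smul_eq_mul, Fin.zero_eta, Fin.mk_one,
      Fin.reduceFinMk, Matrix.cons_val] <;> ring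

theorem biDeltaEigenvalue_biDeltaMoments (s : ℝ) {α β μ ν : ℝ} (hα : α ≠ 0)
    (hβ : β ≠ 0) (hαβ : α + β ≠ 0) (hμν : μ ≠ ν) :
    biDeltaEigenvalue s (biDeltaMoments α β μ ν) =
      (μ + ν) / 2 + s * |μ - ν| / 2 := by
  have hμν' : μ - ν ≠ 0 := sub_ne_zero.mpr hμν
  have hp : α * μ ^ 2 + β * ν ^ 2 - (α + β) * ((α * μ + β * ν) / (α + β)) ^ 2
      = α * β * (μ - ν) ^ 2 / (α + β) := by
    field_simp; ring
  have hq : α * μ ^ 3 + β * ν ^ 3 - (α + β) * ((α * μ + β * ν) / (α + β)) ^ 3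
      - 3 * (α * β * (μ - ν) ^ 2 / (α + β)) * ((α * μ + β * ν) / (α + β))
      = α * β * (β - α) * (μ - ν) ^ 3 / (α + β) ^ 2 := by
    field_simp; ring
  have hdisc : α * β * (μ - ν) ^ 2 / (α + β) / (α + β)
      + (α * β * (β - α) * (μ - ν) ^ 3 / (α + β) ^ 2
          / (2 * (α * β * (μ - ν) ^ 2 / (α + β)))) ^ 2
      = ((μ - ν) / 2) ^ 2 := by
    field_simp; ring
  simp only [biDeltaEigenvalue, biDeltaMoments, Matrix.cons_val_zero, Matrix.cons_val_one,
    Matrix.cons_val_two, Matrix.cons_val_three, Matrix.head_cons, Matrix.tail_cons]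
  rw [hp, hq, hdisc, Real.sqrt_sq_eq_abs, abs_div, abs_two]
  field_simp
  ring

theorem fderiv_biDeltaEigenvalue_biDeltaMoments (s : ℝ) {α β μ ν : ℝ} (hα : 0 < α)
    (hβ : 0 < β) (hμν : μ ≠ ν) :
    fderiv ℝ (biDeltaEigenvalue s) (biDeltaMoments α β μ ν) ![1, μ, μ ^ 2, μ ^ 3] = 0 := by
  apply fderiv_apply_eq_zero_of_eventually_eq_on_line
  filter_upwards [eventually_gt_nhds (neg_lt_zero.mpr hα)] with t ht
  rw [biDeltaMoments_add_smul, biDeltaEigenvalue_biDeltaMoments s (by linarith) hβ.ne'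
    (by linarith) hμν, biDeltaEigenvalue_biDeltaMoments s hα.ne' hβ.ne' (by linarith) hμν]

theorem biDeltaMoments_eq_of_center_halfWidth (ρ u a δ : ℝ) (hδ : δ ≠ 0) :
    biDeltaMoments (ρ / 2 * (1 - a / δ)) (ρ / 2 * (1 + a / δ)) (u + a + δ) (u + a - δ)
      = ![ρ, ρ * u, ρ * u ^ 2 + ρ * (δ ^ 2 - a ^ 2),
          ρ * u ^ 3 + 3 * (ρ * (δ ^ 2 - a ^ 2)) * u + 2 * (ρ * (δ ^ 2 - a ^ 2)) * a] := by
  ext k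
  fin_cases k <;>
    simp only [biDeltaMoments, Fin.zero_eta, Fin.mk_one, Fin.reduceFinMk, Matrix.cons_val] <;>
    field_simp <;> ring

theorem exists_biDeltaMoments_eq {ρ p s : ℝ} (u q : ℝ) (hρ : 0 < ρ) (hp : 0 < p)
    (hs : |s| = 1) :
    ∃ α β μ ν, 0 < α ∧ 0 < β ∧ μ ≠ ν ∧ s * |μ - ν| = μ - ν ∧
      ![ρ, ρ * u, ρ * u ^ 2 + p, ρ * u ^ 3 + 3 * p * u + q] = biDeltaMoments α β μ ν := by
  set a := q / (2 * p)
  set R := Real.sqrt (p / ρ + a ^ 2)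
  set δ := s * R
  have haR : |a| < R :=
    Real.lt_sqrt (abs_nonneg a) |>.mpr (by rw [sq_abs]; linarith [div_pos hp hρ])
  have hR : 0 < R := (abs_nonneg a).trans_lt haR
  have hδR : |δ| = R := by rw [abs_mul, hs, abs_of_pos hR, one_mul]
  have hδ : δ ≠ 0 := by rw [← abs_pos, hδR]; exact hR
  have hweight : |a / δ| < 1 := by rw [abs_div, hδR, div_lt_one hR]; exact haR
  obtain ⟨hw₁, hw₂⟩ := abs_lt.mp hweight
  have hp' : p = ρ * (δ ^ 2 - a ^ 2) := by
    rw [← sq_abs δ, hδR, Real.sq_sqrt (by positivity)]; field_simp; ring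
  have hq : q = 2 * p * a := (mul_div_cancel₀ q (by positivity)).symm
  -- `u + a` is the centre of mass of the two nodes and `δ` their signed half-distance
  refine ⟨ρ / 2 * (1 - a / δ), ρ / 2 * (1 + a / δ), u + a + δ, u + a - δ,
    by nlinarith, by nlinarith, ?_, ?_, ?_⟩
  · intro h; apply hδ; linarith
  · rw [show u + a + δ - (u + a - δ) = 2 * δ by ring, abs_mul, abs_two, hδR]
    ring
  · rw [biDeltaMoments_eq_of_center_halfWidth ρ u a δ hδ, ← hp', hq]

/-- linear degeneracy of the bi-delta closure: for each eigenvalue field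
`λ = μᵢ(U)` with eigenvector `r = (1, μᵢ, μᵢ², μᵢ³)`, the directional derivative
`∇_U λ · r` vanishes. -/
theorem stmt_5 (ρ u p q : ℝ) (hρ : 0 < ρ) (hp : 0 < p)
    (U₀ : Fin 4 → ℝ)
    (hU₀ : U₀ = ![ρ, ρ*u, ρ*u^2 + p, ρ*u^3 + 3*p*u + q]) :
    ∀ s ∈ ({-1, 1} : Set ℝ),
      fderiv ℝ (biDeltaEigenvalue s) U₀
        ![1, biDeltaEigenvalue s U₀, (biDeltaEigenvalue s U₀)^2,
          (biDeltaEigenvalue s U₀)^3] = 0 := by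
  intro s hs
  have hs1 : |s| = 1 := by rcases hs with rfl | rfl <;> norm_num
  obtain ⟨α, β, μ, ν, hα, hβ, hμν, hsign, hmoments⟩ :=
    exists_biDeltaMoments_eq u q hρ hp hs1
  have heig : biDeltaEigenvalue s U₀ = μ := by
    rw [hU₀, hmoments, biDeltaEigenvalue_biDeltaMoments s hα.ne' hβ.ne' (by linarith) hμν,
      hsign]
    ring
  rw [heig, hU₀, hmoments]
  exact fderiv_biDeltaEigenvalue_biDeltaMoments s hα hβ hμν
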